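/- arXiv:1905.00613 — 5 statements merged into one kernel-verified Lean document; each statement's English description precedes it below -/
import Mathlib

section
/- The number of non-decreasing self-bounded functions on {1,...,n} (functions f with f(i) ≤ i for all i and f(i) ≤ f(i+1) for 1 ≤ i < n) equals the n-th Catalan number. -/
/-!
Record a Dyck word of semilength `n` by the positions `e 0 < e 1 < ⋯ < e (n-1)` of its up-steps
in `{0, …, 2n-1}`, and put `f i = e i - i`, the number of down-steps before the `i`-th up-step.
The positions increase strictly exactly when `f` is non-decreasing, and the prefix condition of
Dyck words (never more down- than up-steps) only has to be checked just before an up-step, where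
it reads `f i ≤ i`. So `f ↦ (i ↦ i + f i)` is a bijection onto the Dyck words of semilength `n`,
which are counted by `catalan n`.
-/

open DyckStep Finset

def wordOfUpPositions (m : ℕ) (S : Finset ℕ) : List DyckStep :=
  (List.range m).map fun j => if j ∈ S then U else D

def upPositions (l : List DyckStep) : Finset ℕ :=
  {j ∈ range l.length | l[j]? = some U}

lemma count_U_add_count_D (l : List DyckStep) : l.count U + l.count D = l.length := by
  rw [List.length_eq_countP_add_countP (· == U)]
  simp only [List.count]
  congr 2
  ext s
  cases s <;> rfl

section WordOfUpPositions

variable {m k : ℕ} {S : Finset ℕ}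

@[simp]
lemma length_wordOfUpPositions : (wordOfUpPositions m S).length = m := by
  simp [wordOfUpPositions]

lemma getElem_wordOfUpPositions {j : ℕ} (hj : j < (wordOfUpPositions m S).length) :
    (wordOfUpPositions m S)[j] = if j ∈ S then U else D := by
  simp [wordOfUpPositions]

lemma take_wordOfUpPositions :
    (wordOfUpPositions m S).take k = wordOfUpPositions (min k m) S := by
  simp [wordOfUpPositions, ← List.map_take, List.take_range]

lemma count_U_wordOfUpPositions : (wordOfUpPositions m S).count U = #{j ∈ S | j < m} := by
  rw [List.count, wordOfUpPositions, List.countP_map,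
    show {j ∈ S | j < m} = {j ∈ range m | j ∈ S} by ext; simp [and_comm], card_def, filter_val,
    range_val, Multiset.range, Multiset.filter_coe, Multiset.coe_card,
    List.countP_eq_length_filter]
  congr 2
  ext j
  by_cases h : j ∈ S <;> simp [h]

lemma wordOfUpPositions_upPositions (l : List DyckStep) :
    wordOfUpPositions l.length (upPositions l) = l := by
  refine List.ext_getElem (by simp) fun j _ hj => ?_
  rw [getElem_wordOfUpPositions]
  rcases l[j].dichotomy with h | h <;> simp [upPositions, hj, h]

lemma upPositions_wordOfUpPositions (hS : ∀ j ∈ S, j < m) :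
    upPositions (wordOfUpPositions m S) = S := by
  ext j
  by_cases hj : j < m
  · by_cases h : j ∈ S <;> simp [upPositions, hj, h, getElem_wordOfUpPositions]
  · simp only [upPositions, mem_filter, mem_range, length_wordOfUpPositions]
    exact ⟨fun h => absurd h.1 hj, fun h => absurd (hS j h) hj⟩

lemma card_upPositions (l : List DyckStep) : #(upPositions l) = l.count U := by
  conv_rhs => rw [← wordOfUpPositions_upPositions l]
  rw [count_U_wordOfUpPositions, filter_true_of_mem]
  exact fun j hj => mem_range.mp (mem_filter.mp hj).1

lemma count_U_take_wordOfUpPositions_image {n : ℕ} {e : Fin n → ℕ}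
    (he : Function.Injective e) (m k : ℕ) :
    ((wordOfUpPositions m (univ.image e)).take k).count U = #{i | e i < min k m} := by
  rw [take_wordOfUpPositions, count_U_wordOfUpPositions, filter_image,
    card_image_of_injective _ he]

end WordOfUpPositions

namespace StrictMono

variable {n : ℕ} {e : Fin n → ℕ}

lemma apply_add_sub_le_apply (he : StrictMono e) {i j : Fin n} (hij : i ≤ j) :
    e i + (j - i) ≤ e j := by
  have hcard := card_le_card_of_injOn e (s := Icc i j) (t := Icc (e i) (e j))
    (fun l hl => by
      simp only [coe_Icc, Set.mem_Icc] at hl ⊢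
      exact ⟨he.monotone hl.1, he.monotone hl.2⟩)
    he.injective.injOn
  rw [Fin.card_Icc, Nat.card_Icc] at hcard
  have := he.monotone hij
  omega

lemma val_le_apply (he : StrictMono e) (i : Fin n) : (i : ℕ) ≤ e i := by
  have := he.apply_add_sub_le_apply (show (⟨0, i.pos⟩ : Fin n) ≤ i from Nat.zero_le _)
  dsimp only at this
  omega

lemma card_filter_apply_lt_apply (he : StrictMono e) (i : Fin n) : #{j | e j < e i} = i := by
  simp only [he.lt_iff_lt]
  rw [← Fin.card_Iio]
  congr 1
  ext
  simp

lemma le_two_mul_card_filter_apply_lt (he : StrictMono e) (hb : ∀ i, e i ≤ 2 * i) {k : ℕ}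
    (hk : k ≤ 2 * n) : k ≤ 2 * #{i | e i < k} := by
  set c := #{i | e i < k}
  obtain hc | hc : c = n ∨ c < n := (card_filter_le _ _).trans_eq (by simp) |>.eq_or_lt
  · omega
  have hkc : k ≤ e ⟨c, hc⟩ := by
    by_contra! hlt
    have hsub : Iic (⟨c, hc⟩ : Fin n) ⊆ ({i | e i < k} : Finset (Fin n)) := fun i hi =>
      mem_filter.mpr ⟨mem_univ _, (he.monotone (mem_Iic.mp hi)).trans_lt hlt⟩
    have := card_le_card hsub
    simp [c] at this
  exact hkc.trans (hb _)

end StrictMono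

lemma strictMono_val_add_iff_monotone {n : ℕ} {f : Fin n → ℕ} :
    StrictMono (fun i : Fin n => (i : ℕ) + f i) ↔ Monotone f := by
  refine ⟨fun h i j hij => ?_, fun h i j hij => add_lt_add_of_lt_of_le hij (h hij.le)⟩
  have := h.apply_add_sub_le_apply hij
  have : (i : ℕ) ≤ j := hij
  omega

namespace DyckWord

variable {n : ℕ}

def ofUpPositions (e : Fin n → ℕ) (he : StrictMono e) (hb : ∀ i, e i ≤ 2 * i) : DyckWord where
  toList := wordOfUpPositions (2 * n) (univ.image e)
  count_U_eq_count_D := by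
    have hU := count_U_take_wordOfUpPositions_image he.injective (2 * n) (2 * n)
    have hUD := count_U_add_count_D (wordOfUpPositions (2 * n) (univ.image e))
    rw [List.take_of_length_le (by simp), min_self,
      filter_true_of_mem fun i _ => (hb i).trans_lt (by omega), card_univ,
      Fintype.card_fin] at hU
    rw [length_wordOfUpPositions] at hUD
    omega
  count_D_le_count_U k := by
    have hUD := count_U_add_count_D ((wordOfUpPositions (2 * n) (univ.image e)).take k)
    rw [List.length_take, length_wordOfUpPositions] at hUD
    rw [count_U_take_wordOfUpPositions_image he.injective] at hUD ⊢
    have := he.le_two_mul_card_filter_apply_lt hb (min_le_right k (2 * n))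
    omega

lemma semilength_ofUpPositions {e : Fin n → ℕ} (he : StrictMono e) (hb : ∀ i, e i ≤ 2 * i) :
    (ofUpPositions e he hb).semilength = n := by
  have := (ofUpPositions e he hb).two_mul_semilength_eq_length
  rwa [ofUpPositions, length_wordOfUpPositions, Nat.mul_left_cancel_iff two_pos] at this

lemma upPositions_ofUpPositions {e : Fin n → ℕ} (he : StrictMono e) (hb : ∀ i, e i ≤ 2 * i) :
    upPositions (ofUpPositions e he hb).toList = univ.image e :=
  upPositions_wordOfUpPositions <| by
    simp only [mem_image, mem_univ, true_and, forall_exists_index, forall_apply_eq_imp_iff]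
    exact fun i => (hb i).trans_lt (by omega)

lemma le_two_mul_of_upPositions_eq_image (p : DyckWord) {e : Fin n → ℕ} (he : StrictMono e)
    (hp : upPositions p.toList = univ.image e) (i : Fin n) : e i ≤ 2 * i := by
  have hlist : p.toList = wordOfUpPositions p.toList.length (univ.image e) := by
    rw [← hp, wordOfUpPositions_upPositions]
  have hlt : e i < p.toList.length :=
    mem_range.mp (mem_filter.mp (hp ▸ mem_image_of_mem e (mem_univ i))).1
  have hU := count_U_take_wordOfUpPositions_image he.injective p.toList.length (e i)
  rw [← hlist, min_eq_left hlt.le, he.card_filter_apply_lt_apply] at hU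
  have hUD := count_U_add_count_D (p.toList.take (e i))
  rw [List.length_take, min_eq_left hlt.le] at hUD
  have := p.count_D_le_count_U (e i)
  omega

lemma eq_ofUpPositions (p : DyckWord) {e : Fin p.semilength → ℕ} (he : StrictMono e)
    (hp : upPositions p.toList = univ.image e) :
    p = ofUpPositions e he (p.le_two_mul_of_upPositions_eq_image he hp) := by
  ext1
  change p.toList = wordOfUpPositions (2 * p.semilength) (univ.image e)
  rw [← hp, two_mul_semilength_eq_length, wordOfUpPositions_upPositions]

end DyckWord

def dyckWordOfMonotoneSelfBounded (n : ℕ) :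
    {f : Fin n → Fin n // (∀ i, f i ≤ i) ∧ Monotone f} → {p : DyckWord // p.semilength = n} :=
  fun f => ⟨.ofUpPositions (fun i => i + f.1 i) (strictMono_val_add_iff_monotone.mpr f.2.2)
    (fun i => by have : (f.1 i : ℕ) ≤ i := f.2.1 i; omega), DyckWord.semilength_ofUpPositions _ _⟩

lemma dyckWordOfMonotoneSelfBounded_injective (n : ℕ) :
    Function.Injective (dyckWordOfMonotoneSelfBounded n) := by
  rintro ⟨f, hf⟩ ⟨g, hg⟩ h
  have hpos := congrArg (upPositions ·.1.toList) h
  simp only [dyckWordOfMonotoneSelfBounded, DyckWord.upPositions_ofUpPositions] at hpos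
  have hrange : Set.range (fun i : Fin n => (i : ℕ) + f i) =
      Set.range fun i : Fin n => (i : ℕ) + g i := by
    simpa using congrArg (fun s : Finset ℕ => (s : Set ℕ)) hpos
  have hfg := ((strictMono_val_add_iff_monotone.mpr hf.2).range_inj
    (strictMono_val_add_iff_monotone.mpr hg.2)).mp hrange
  ext i
  simpa using congrFun hfg i

lemma dyckWordOfMonotoneSelfBounded_surjective (n : ℕ) :
    Function.Surjective (dyckWordOfMonotoneSelfBounded n) := by
  rintro ⟨p, rfl⟩
  obtain ⟨e, hpe⟩ : ∃ e : Fin p.semilength ↪o ℕ, upPositions p.toList = univ.image e :=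
    ⟨_, (image_orderEmbOfFin_univ _ (card_upPositions _)).symm⟩
  have hb := p.le_two_mul_of_upPositions_eq_image e.strictMono hpe
  have he : (fun i : Fin p.semilength => i + (e i - i)) = e := by
    funext i
    have := e.strictMono.val_le_apply i
    omega
  have hmono : Monotone fun i => e i - i :=
    strictMono_val_add_iff_monotone.mp (by rw [he]; exact e.strictMono)
  refine ⟨⟨fun i => ⟨e i - i, by have := hb i; omega⟩, fun i => ?_, hmono⟩, ?_⟩
  · change e i - i ≤ i
    have := hb i
    omega
  · ext1
    conv_rhs => rw [p.eq_ofUpPositions e.strictMono hpe]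
    simp only [dyckWordOfMonotoneSelfBounded, he]

/-- The number of non-decreasing self-bounded functions on `{1,...,n}` equals the
`n`-th Catalan number. -/
theorem card_monotone_selfBounded_eq_catalan (n : ℕ) :
    Fintype.card {f : Fin n → Fin n // (∀ i, f i ≤ i) ∧ Monotone f} = catalan n := by
  rw [← DyckWord.card_dyckWord_semilength_eq_catalan n]
  exact Fintype.card_of_bijective ⟨dyckWordOfMonotoneSelfBounded_injective n,
    dyckWordOfMonotoneSelfBounded_surjective n⟩
end

section
/- Let I_n = {(i,j) : 1 ≤ i ≤ j ≤ n} and call a subset S ⊆ I_n an FB-configuration if (FB0) (1,n) ∈ S; (FB1) for every (i,j) ∈ S with (i,j) ≠ (1,n), the cohook {(k,j) : 1 ≤ k < i} ∪ {(i,ℓ) : j < ℓ ≤ n} meets S; and (FB2) for every k with 2 ≤ k ≤ n, the virtual cohook {(m, k−1) : 1 ≤ m < k} ∪ {(k, ℓ) : k ≤ ℓ ≤ n} meets S. Then the number of FB-configurations in I_n is Π_{i=1}^n (2^i − 1). -/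
/-- The index set `I_n = {(i,j) : 1 ≤ i ≤ j ≤ n}`, as a finset of pairs of naturals. -/
def indexSet (n : ℕ) : Finset (ℕ × ℕ) :=
  (Finset.Icc 1 n ×ˢ Finset.Icc 1 n).filter (fun p => p.1 ≤ p.2)

/-- The cohook of `(i,j)`: `{(k,j) : 1 ≤ k < i} ∪ {(i,ℓ) : j < ℓ ≤ n}`.
For `j = k - 1` with `2 ≤ k ≤ n` this is the virtual cohook
`{(m,k−1) : 1 ≤ m < k} ∪ {(k,ℓ) : k ≤ ℓ ≤ n}`. -/
def cohook (n i j : ℕ) : Finset (ℕ × ℕ) :=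
  (Finset.Icc 1 n ×ˢ Finset.Icc 1 n).filter
    (fun p => (p.2 = j ∧ p.1 < i) ∨ (p.1 = i ∧ j < p.2))

/-- `S ⊆ I_n` is an FB-configuration if `(1,n) ∈ S`, each element `≠ (1,n)` of `S` has its
cohook meeting `S`, and each virtual cohook (for `2 ≤ k ≤ n`) meets `S`. -/
def IsFB (n : ℕ) (S : Finset (ℕ × ℕ)) : Prop :=
  (1, n) ∈ S ∧
  (∀ p ∈ S, p ≠ (1, n) → (cohook n p.1 p.2 ∩ S).Nonempty) ∧
  (∀ k ∈ Finset.Icc 2 n, (cohook n k (k - 1) ∩ S).Nonempty)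

instance (n : ℕ) : DecidablePred (IsFB n) := fun S => by
  unfold IsFB; infer_instance

open Finset

/-!
Scan `I_n` column by column from the left. Once the columns `1, …, j` are chosen, what remains
is a configuration of the columns `j + 1, …, n` that must still meet a set `R ⊆ {2, …, j + 1}`
of rows: rows whose cell was topmost in its column (its cohook has to be met to the right), and
row `k` when column `k - 1` is empty (virtual cohook). The number of such completions depends
only on `#R`: with `A = 2 ^ (n - j)` it is `A ^ (j - #R) * (A - 1) ^ #R * ∏_{i ≤ n - j} (2^i - 1)`,
as if each row `2, …, j + 1` independently chose its cells in the remaining `n - j` columns,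
nonempty for the rows of `R`. Summing over the `2 ^ (j + 1)` choices of column `j + 1` proves
this by induction on `n - j`, and `j = 0` is the theorem.
-/

theorem prod_ite_mem_of_subset {ι M : Type*} [DecidableEq ι] [CommMonoid M] {E X : Finset ι}
    (hX : X ⊆ E) (u v : M) :
    ∏ e ∈ E, (if e ∈ X then u else v) = v ^ (#E - #X) * u ^ #X := by
  rw [prod_ite, prod_const, prod_const, filter_mem_eq_inter, inter_eq_right.2 hX,
    filter_notMem_eq_sdiff, card_sdiff_of_subset hX, mul_comm]

theorem sum_powerset_pow_card_sdiff {ι R : Type*} [DecidableEq ι] [CommSemiring R]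
    {E Q : Finset ι} (hQ : Q ⊆ E) (a b : R) :
    ∑ t ∈ E.powerset, a ^ (#E - #(Q \ t)) * b ^ #(Q \ t) =
      (a + a) ^ (#E - #Q) * (a + b) ^ #Q := by
  calc ∑ t ∈ E.powerset, a ^ (#E - #(Q \ t)) * b ^ #(Q \ t)
      = ∑ t ∈ E.powerset, (∏ _e ∈ t, a) * ∏ e ∈ E \ t, (if e ∈ Q then b else a) := by
        refine sum_congr rfl fun t ht => ?_
        rw [← prod_ite_mem_of_subset (sdiff_subset.trans hQ), ← prod_sdiff (mem_powerset.1 ht),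
          mul_comm]
        congr 1
        · exact prod_congr rfl fun e he => by simp_all
        · exact prod_congr rfl fun e he => by simp [(mem_sdiff.1 he).2]
    _ = ∏ e ∈ E, (if e ∈ Q then a + b else a + a) := by
        rw [← prod_add]
        exact prod_congr rfl fun e _ => by split_ifs <;> rfl
    _ = (a + a) ^ (#E - #Q) * (a + b) ^ #Q := prod_ite_mem_of_subset hQ _ _

/-- `U` is the part to the right of column `j` of an FB-configuration whose part up to column `j`
leaves the rows of `R` to be met. -/
structure IsPartialFB (n j : ℕ) (R : Finset ℕ) (U : Finset (ℕ × ℕ)) : Prop where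
  subset_indexSet : U ⊆ indexSet n
  lt_snd : ∀ p ∈ U, j < p.2
  corner_mem : (1, n) ∈ U
  cohook_meets : ∀ p ∈ U, p ≠ (1, n) →
    (∃ q ∈ U, q.2 = p.2 ∧ q.1 < p.1) ∨ (∃ q ∈ U, q.1 = p.1 ∧ p.2 < q.2)
  row_meets : ∀ a ∈ R, ∃ q ∈ U, q.1 = a
  virtual_cohook_meets : ∀ k, j + 2 ≤ k → k ≤ n →
    (∃ q ∈ U, q.2 = k - 1 ∧ q.1 < k) ∨ (∃ q ∈ U, q.1 = k ∧ k - 1 < q.2)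

open scoped Classical in
noncomputable def partialFBs (n j : ℕ) (R : Finset ℕ) : Finset (Finset (ℕ × ℕ)) :=
  (indexSet n).powerset.filter (IsPartialFB n j R)

theorem mem_partialFBs {n j : ℕ} {R : Finset ℕ} {U : Finset (ℕ × ℕ)} :
    U ∈ partialFBs n j R ↔ IsPartialFB n j R U := by
  simpa [partialFBs] using fun h : IsPartialFB n j R U => h.subset_indexSet

theorem mem_indexSet {n : ℕ} {p : ℕ × ℕ} :
    p ∈ indexSet n ↔ 1 ≤ p.1 ∧ p.1 ≤ p.2 ∧ p.2 ≤ n := by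
  simp only [indexSet, mem_filter, mem_product, mem_Icc]
  omega

theorem cohook_inter_nonempty_iff {n i j : ℕ} {U : Finset (ℕ × ℕ)} (hU : U ⊆ indexSet n) :
    (cohook n i j ∩ U).Nonempty ↔
      (∃ q ∈ U, q.2 = j ∧ q.1 < i) ∨ (∃ q ∈ U, q.1 = i ∧ j < q.2) := by
  have hbounds : ∀ q ∈ U, q ∈ Icc 1 n ×ˢ Icc 1 n := fun q hq => by
    have := mem_indexSet.1 (hU hq)
    simp only [mem_product, mem_Icc]
    omega
  simp only [Finset.Nonempty, mem_inter, cohook, mem_filter]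
  constructor
  · rintro ⟨q, ⟨-, hq | hq⟩, hqU⟩
    exacts [Or.inl ⟨q, hqU, hq⟩, Or.inr ⟨q, hqU, hq⟩]
  · rintro (⟨q, hqU, hq⟩ | ⟨q, hqU, hq⟩)
    exacts [⟨q, ⟨hbounds q hqU, Or.inl hq⟩, hqU⟩, ⟨q, ⟨hbounds q hqU, Or.inr hq⟩, hqU⟩]

theorem isFB_iff_isPartialFB {n : ℕ} {S : Finset (ℕ × ℕ)} (hS : S ⊆ indexSet n) :
    IsFB n S ↔ IsPartialFB n 0 ∅ S := by
  have hpos : ∀ p ∈ S, 0 < p.2 := fun p hp => by have := mem_indexSet.1 (hS hp); omega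
  simp only [IsFB, cohook_inter_nonempty_iff hS, mem_Icc]
  constructor
  · rintro ⟨hcorner, hcohook, hvirtual⟩
    exact ⟨hS, hpos, hcorner, hcohook, by simp, fun k hk hkn => hvirtual k ⟨by omega, hkn⟩⟩
  · rintro ⟨-, -, hcorner, hcohook, -, hvirtual⟩
    exact ⟨hcorner, hcohook, fun k hk => hvirtual k (by omega) hk.2⟩

theorem filter_isFB_eq_partialFBs (n : ℕ) :
    (indexSet n).powerset.filter (IsFB n) = partialFBs n 0 ∅ := by
  ext S
  rw [mem_filter, mem_powerset, mem_partialFBs]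
  exact ⟨fun h => (isFB_iff_isPartialFB h.1).1 h.2,
    fun h => ⟨h.subset_indexSet, (isFB_iff_isPartialFB h.subset_indexSet).2 h⟩⟩

def rowsInColumn (l : ℕ) (U : Finset (ℕ × ℕ)) : Finset ℕ :=
  (U.filter (·.2 = l)).image Prod.fst

theorem mem_rowsInColumn {l a : ℕ} {U : Finset (ℕ × ℕ)} :
    a ∈ rowsInColumn l U ↔ (a, l) ∈ U := by
  simp [rowsInColumn]

theorem rowsInColumn_union_product {l : ℕ} {U : Finset (ℕ × ℕ)} (C : Finset ℕ)
    (hU : ∀ p ∈ U, p.2 ≠ l) : rowsInColumn l (U ∪ C ×ˢ {l}) = C := by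
  ext a
  simp only [mem_rowsInColumn, mem_union, mem_product, mem_singleton, and_true,
    or_iff_right_iff_imp]
  exact fun h => absurd rfl (hU _ h)

theorem filter_union_product {l : ℕ} {U : Finset (ℕ × ℕ)} (C : Finset ℕ)
    (hU : ∀ p ∈ U, l < p.2) : (U ∪ C ×ˢ {l}).filter (l < ·.2) = U := by
  ext p
  simp only [mem_filter, mem_union, mem_product, mem_singleton]
  constructor
  · rintro ⟨hp | hp, hlt⟩
    exacts [hp, absurd hp.2 hlt.ne']
  · exact fun hp => ⟨Or.inl hp, hU p hp⟩

theorem filter_union_rowsInColumn_product {l : ℕ} {U : Finset (ℕ × ℕ)}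
    (hU : ∀ p ∈ U, l ≤ p.2) :
    U.filter (l < ·.2) ∪ rowsInColumn l U ×ˢ {l} = U := by
  ext p
  simp only [mem_union, mem_filter, mem_product, mem_singleton, mem_rowsInColumn]
  constructor
  · rintro (⟨hp, -⟩ | ⟨hp, rfl⟩)
    exacts [hp, hp]
  · intro hp
    rcases (hU p hp).lt_or_eq with hlt | heq
    exacts [Or.inl ⟨hp, hlt⟩, Or.inr ⟨by rwa [heq], heq.symm⟩]

theorem mem_rowsInColumn_of_mem {l : ℕ} {q : ℕ × ℕ} {U : Finset (ℕ × ℕ)} (hq : q ∈ U)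
    (hql : q.2 = l) : q.1 ∈ rowsInColumn l U :=
  mem_rowsInColumn.2 (hql ▸ hq)

/-- If column `j + 1` contains the rows `C`, its topmost cell can only meet its cohook to the
right, and if `C = ∅` the virtual cohook at `j + 2` must be met in row `j + 2`; row `1` is always
met by `(1, n)`. -/
def requiredRows (j : ℕ) (R C : Finset ℕ) : Finset ℕ :=
  (if h : C.Nonempty then insert (C.min' h) (R \ C) else insert (j + 2) R).erase 1

theorem mem_requiredRows {j a : ℕ} {R C : Finset ℕ} :
    a ∈ requiredRows j R C ↔
      a ≠ 1 ∧ ((a ∈ R ∧ a ∉ C) ∨ (∃ h : C.Nonempty, a = C.min' h) ∨ (C = ∅ ∧ a = j + 2)) := by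
  unfold requiredRows
  split_ifs with hC
  · simp only [mem_erase, mem_insert, mem_sdiff, hC.ne_empty, false_and, or_false,
      exists_prop_of_true hC]
    tauto
  · simp [not_nonempty_iff_eq_empty.1 hC, or_comm]

theorem requiredRows_subset {j : ℕ} {R C : Finset ℕ} (hR : R ⊆ Icc 2 (j + 1))
    (hC : C ⊆ Icc 1 (j + 1)) : requiredRows j R C ⊆ Icc 2 (j + 2) := by
  intro a ha
  obtain ⟨ha1, ⟨haR, -⟩ | ⟨hne, rfl⟩ | ⟨-, rfl⟩⟩ := mem_requiredRows.1 ha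
  · have := mem_Icc.1 (hR haR); rw [mem_Icc]; omega
  · have := mem_Icc.1 (hC (min'_mem C hne)); rw [mem_Icc]; omega
  · rw [mem_Icc]; omega

theorem requiredRows_insert_one {j : ℕ} {R t : Finset ℕ} (hR : R ⊆ Icc 2 (j + 1))
    (ht : t ⊆ Icc 2 (j + 1)) : requiredRows j R (insert 1 t) = R \ t := by
  have hmin : (insert 1 t).min' (insert_nonempty 1 t) = 1 :=
    le_antisymm (min'_le _ _ (mem_insert_self 1 t)) <| le_min' _ _ _ fun a ha => by
      rcases mem_insert.1 ha with rfl | ha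
      exacts [le_rfl, by have := mem_Icc.1 (ht ha); omega]
  ext a
  simp only [mem_requiredRows, hmin, mem_sdiff, mem_insert, insert_ne_empty, false_and,
    or_false]
  have : a ∈ R → a ≠ 1 := fun haR => by have := mem_Icc.1 (hR haR); omega
  tauto

theorem card_requiredRows_of_one_notMem {j : ℕ} {R t : Finset ℕ} (hR : R ⊆ Icc 2 (j + 1))
    (ht : t ⊆ Icc 2 (j + 1)) : #(requiredRows j R t) = #(R \ t) + 1 := by
  have h1R : 1 ∉ R := fun h => by have := mem_Icc.1 (hR h); omega
  unfold requiredRows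
  split_ifs with hne
  · have hmin := min'_mem t hne
    have := mem_Icc.1 (ht hmin)
    rw [erase_eq_of_notMem (by simp [h1R]; omega),
      card_insert_of_notMem fun h => (mem_sdiff.1 h).2 hmin]
  · rw [not_nonempty_iff_eq_empty.1 hne, sdiff_empty,
      erase_eq_of_notMem (by simp [h1R]),
      card_insert_of_notMem fun h => by have := mem_Icc.1 (hR h); omega]

theorem pow_card_requiredRows_add {M : Type*} [CommSemiring M] (a b : M) {j : ℕ}
    {R t : Finset ℕ} (hR : R ⊆ Icc 2 (j + 1)) (ht : t ⊆ Icc 2 (j + 1)) :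
    a ^ (j + 1 - #(requiredRows j R t)) * b ^ #(requiredRows j R t) +
        a ^ (j + 1 - #(requiredRows j R (insert 1 t))) * b ^ #(requiredRows j R (insert 1 t)) =
      (a + b) * (a ^ (j - #(R \ t)) * b ^ #(R \ t)) := by
  have hle : #(R \ t) ≤ j := by
    have := card_le_card (sdiff_subset.trans hR : R \ t ⊆ _)
    rw [Nat.card_Icc] at this
    omega
  rw [card_requiredRows_of_one_notMem hR ht, requiredRows_insert_one hR ht,
    show j + 1 - (#(R \ t) + 1) = j - #(R \ t) by omega,
    show j + 1 - #(R \ t) = j - #(R \ t) + 1 by omega]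
  ring

theorem IsPartialFB.restrict {n j : ℕ} {R : Finset ℕ} {U : Finset (ℕ × ℕ)}
    (hU : IsPartialFB n j R U) (hj : j + 1 < n) :
    IsPartialFB n (j + 1) (requiredRows j R (rowsInColumn (j + 1) U))
      (U.filter (j + 1 < ·.2)) := by
  have mem_right : ∀ q, q ∈ U.filter (j + 1 < ·.2) ↔ q ∈ U ∧ j + 1 < q.2 := fun q =>
    mem_filter
  refine ⟨(filter_subset _ _).trans hU.subset_indexSet, fun p hp => ((mem_right p).1 hp).2,
    (mem_right _).2 ⟨hU.corner_mem, hj⟩, ?_, ?_, ?_⟩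
  · intro p hp hp1
    obtain ⟨hpU, hpj⟩ := (mem_right p).1 hp
    rcases hU.cohook_meets p hpU hp1 with ⟨q, hqU, hq⟩ | ⟨q, hqU, hq⟩
    · exact Or.inl ⟨q, (mem_right q).2 ⟨hqU, by omega⟩, hq⟩
    · exact Or.inr ⟨q, (mem_right q).2 ⟨hqU, by omega⟩, hq⟩
  · intro a ha
    obtain ⟨ha1, ⟨haR, haC⟩ | ⟨hne, rfl⟩ | ⟨hC, rfl⟩⟩ := mem_requiredRows.1 ha
    · obtain ⟨q, hqU, rfl⟩ := hU.row_meets a haR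
      have hq : q.2 ≠ j + 1 := fun h => haC (mem_rowsInColumn_of_mem hqU h)
      exact ⟨q, (mem_right q).2 ⟨hqU, by have := hU.lt_snd q hqU; omega⟩, rfl⟩
    · have hmin := mem_rowsInColumn.1 (min'_mem _ hne)
      rcases hU.cohook_meets _ hmin (by simp [ha1]) with ⟨q, hqU, hq⟩ | ⟨q, hqU, hq⟩
      · have := min'_le _ q.1 (mem_rowsInColumn_of_mem hqU hq.1)
        exact absurd hq.2 (not_lt.2 this)
      · exact ⟨q, (mem_right q).2 ⟨hqU, hq.2⟩, hq.1⟩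
    · rcases hU.virtual_cohook_meets (j + 2) le_rfl hj with ⟨q, hqU, hq⟩ | ⟨q, hqU, hq⟩
      · simpa [hC] using mem_rowsInColumn_of_mem hqU (by omega : q.2 = j + 1)
      · exact ⟨q, (mem_right q).2 ⟨hqU, by omega⟩, hq.1⟩
  · intro k hk hkn
    rcases hU.virtual_cohook_meets k (by omega) hkn with ⟨q, hqU, hq⟩ | ⟨q, hqU, hq⟩
    · exact Or.inl ⟨q, (mem_right q).2 ⟨hqU, by omega⟩, hq⟩
    · exact Or.inr ⟨q, (mem_right q).2 ⟨hqU, by omega⟩, hq⟩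

theorem IsPartialFB.extend {n j : ℕ} {R C : Finset ℕ} {U : Finset (ℕ × ℕ)}
    (hU : IsPartialFB n (j + 1) (requiredRows j R C) U) (hC : C ⊆ Icc 1 (j + 1)) :
    IsPartialFB n j R (U ∪ C ×ˢ {j + 1}) := by
  have hjn : j + 1 < n := hU.lt_snd _ hU.corner_mem
  have mem_column : ∀ p ∈ C ×ˢ {j + 1}, p.1 ∈ C ∧ p.2 = j + 1 := fun p hp =>
    (mem_product.1 hp).imp_right mem_singleton.1
  have lift : ∀ {P : ℕ × ℕ → Prop}, (∃ q ∈ U, P q) → ∃ q ∈ U ∪ C ×ˢ {j + 1}, P q :=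
    fun ⟨q, hq, h⟩ => ⟨q, mem_union_left _ hq, h⟩
  have column_mem : ∀ a ∈ C, (a, j + 1) ∈ U ∪ C ×ˢ {j + 1} := fun a ha =>
    mem_union_right _ (mem_product.2 ⟨ha, mem_singleton_self _⟩)
  refine ⟨union_subset hU.subset_indexSet fun p hp => ?_, fun p hp => ?_,
    mem_union_left _ hU.corner_mem, fun p hp hp1 => ?_, fun a ha => ?_, fun k hk hkn => ?_⟩
  · have := mem_Icc.1 (hC (mem_column p hp).1)
    have := (mem_column p hp).2
    rw [mem_indexSet]
    omega
  · rcases mem_union.1 hp with hp | hp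
    · have := hU.lt_snd p hp; omega
    · have := (mem_column p hp).2; omega
  · rcases mem_union.1 hp with hp | hp
    · exact (hU.cohook_meets p hp hp1).imp lift lift
    obtain ⟨haC, hp2⟩ := mem_column p hp
    rcases (min'_le C p.1 haC).lt_or_eq with hlt | heq
    · exact Or.inl ⟨_, column_mem _ (min'_mem C ⟨_, haC⟩), hp2.symm, hlt⟩
    right
    by_cases hp1' : p.1 = 1
    · exact ⟨(1, n), mem_union_left _ hU.corner_mem, hp1'.symm, by omega⟩
    · obtain ⟨q, hqU, hq⟩ :=
        hU.row_meets p.1 (mem_requiredRows.2 ⟨hp1', Or.inr (Or.inl ⟨_, heq.symm⟩)⟩)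
      exact ⟨q, mem_union_left _ hqU, hq, by have := hU.lt_snd q hqU; omega⟩
  · by_cases haC : a ∈ C
    · exact ⟨_, column_mem a haC, rfl⟩
    by_cases ha1 : a = 1
    · exact ⟨(1, n), mem_union_left _ hU.corner_mem, ha1.symm⟩
    · exact lift (hU.row_meets a (mem_requiredRows.2 ⟨ha1, Or.inl ⟨ha, haC⟩⟩))
  · rcases (show j + 2 ≤ k from hk).lt_or_eq with hlt | rfl
    · exact (hU.virtual_cohook_meets k hlt hkn).imp lift lift
    rcases C.eq_empty_or_nonempty with rfl | ⟨c, hc⟩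
    · obtain ⟨q, hqU, hq⟩ := hU.row_meets (j + 2) (mem_requiredRows.2 ⟨by omega, by simp⟩)
      exact Or.inr ⟨q, mem_union_left _ hqU, hq, by have := hU.lt_snd q hqU; omega⟩
    · exact Or.inl ⟨_, column_mem c hc, rfl, by have := mem_Icc.1 (hC hc); omega⟩

theorem card_partialFBs_eq_sum {n j : ℕ} (R : Finset ℕ) (hj : j + 1 < n) :
    #(partialFBs n j R) =
      ∑ C ∈ (Icc 1 (j + 1)).powerset, #(partialFBs n (j + 1) (requiredRows j R C)) := by
  have hmaps : Set.MapsTo (rowsInColumn (j + 1)) (partialFBs n j R) (Icc 1 (j + 1)).powerset := by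
    intro U hU
    have hU := mem_partialFBs.1 hU
    refine mem_powerset.2 fun a ha => ?_
    have := mem_indexSet.1 (hU.subset_indexSet (mem_rowsInColumn.1 ha))
    exact mem_Icc.2 ⟨this.1, this.2.1⟩
  rw [card_eq_sum_card_fiberwise hmaps]
  refine sum_congr rfl fun C hC => card_nbij' (·.filter (j + 1 < ·.2)) (· ∪ C ×ˢ {j + 1})
    (fun U hU => ?_) (fun U hU => ?_) (fun U hU => ?_) (fun U hU => ?_)
  · obtain ⟨hUj, rfl⟩ := mem_filter.1 hU
    exact mem_partialFBs.2 ((mem_partialFBs.1 hUj).restrict hj)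
  · have hU := mem_partialFBs.1 hU
    refine mem_filter.2 ⟨mem_partialFBs.2 (hU.extend (mem_powerset.1 hC)), ?_⟩
    exact rowsInColumn_union_product C fun p hp => (hU.lt_snd p hp).ne'
  · obtain ⟨hUj, rfl⟩ := mem_filter.1 hU
    exact filter_union_rowsInColumn_product fun p hp => (mem_partialFBs.1 hUj).lt_snd p hp
  · exact filter_union_product C (mem_partialFBs.1 hU).lt_snd

theorem isPartialFB_product_last {j : ℕ} {R D : Finset ℕ} (hRD : insert 1 R ⊆ D)
    (hD : D ⊆ Icc 1 (j + 1)) : IsPartialFB (j + 1) j R (D ×ˢ {j + 1}) := by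
  have mem_column : ∀ p ∈ D ×ˢ {j + 1}, 1 ≤ p.1 ∧ p.1 ≤ j + 1 ∧ p.2 = j + 1 := fun p hp => by
    obtain ⟨hp1, hp2⟩ := mem_product.1 hp
    have := mem_Icc.1 (hD hp1)
    exact ⟨this.1, this.2, mem_singleton.1 hp2⟩
  have column_mem : ∀ a ∈ D, (a, j + 1) ∈ D ×ˢ {j + 1} := fun a ha =>
    mem_product.2 ⟨ha, mem_singleton_self _⟩
  have corner := column_mem 1 (hRD (mem_insert_self _ _))
  refine ⟨fun p hp => ?_, fun p hp => ?_, corner, fun p hp hp1 => ?_,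
    fun a ha => ⟨_, column_mem a (hRD (mem_insert_of_mem ha)), rfl⟩, fun k hk hkn => by omega⟩
  · have := mem_column p hp
    rw [mem_indexSet]
    omega
  · have := mem_column p hp
    omega
  · have := mem_column p hp
    refine Or.inl ⟨(1, j + 1), corner, by omega, lt_of_le_of_ne this.1 fun h => hp1 ?_⟩
    exact Prod.ext h.symm (by omega)

theorem card_partialFBs_last {j : ℕ} {R : Finset ℕ} (hR : R ⊆ Icc 2 (j + 1)) :
    #(partialFBs (j + 1) j R) = 2 ^ (j - #R) := by
  have hins : insert 1 R ⊆ Icc 1 (j + 1) :=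
    insert_subset (by simp) fun a ha => by have := mem_Icc.1 (hR ha); exact mem_Icc.2 (by omega)
  have h1R : 1 ∉ R := fun h => by have := mem_Icc.1 (hR h); omega
  have hexp : j - #R = #(Icc 1 (j + 1)) - #(insert 1 R) := by
    rw [Nat.card_Icc, card_insert_of_notMem h1R]; omega
  rw [hexp, ← card_Icc_finset hins]
  refine card_nbij' (rowsInColumn (j + 1)) (· ×ˢ {j + 1}) (fun U hU => ?_) (fun D hD => ?_)
    (fun U hU => ?_) (fun D _ => ?_)
  · have hU := mem_partialFBs.1 hU
    have in_column : ∀ q ∈ U, q.2 = j + 1 := fun q hq => by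
      have := hU.lt_snd q hq; have := mem_indexSet.1 (hU.subset_indexSet hq); omega
    refine Finset.mem_Icc.2 ⟨insert_subset (mem_rowsInColumn.2 hU.corner_mem) fun a ha => ?_,
      fun a ha => ?_⟩
    · obtain ⟨q, hqU, rfl⟩ := hU.row_meets a ha
      exact mem_rowsInColumn_of_mem hqU (in_column q hqU)
    · have := mem_indexSet.1 (hU.subset_indexSet (mem_rowsInColumn.1 ha))
      exact mem_Icc.2 ⟨this.1, this.2.1⟩
  · obtain ⟨hRD, hD⟩ := Finset.mem_Icc.1 hD
    exact mem_partialFBs.2 (isPartialFB_product_last hRD hD)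
  · have hU := mem_partialFBs.1 hU
    have hempty : U.filter (j + 1 < ·.2) = ∅ := filter_eq_empty_iff.2 fun p hp => by
      have := mem_indexSet.1 (hU.subset_indexSet hp); omega
    simpa [hempty] using
      filter_union_rowsInColumn_product (l := j + 1) fun p hp => hU.lt_snd p hp
  · simpa using rowsInColumn_union_product (U := ∅) D (by simp)

theorem card_partialFBs (d : ℕ) {j : ℕ} {R : Finset ℕ} (hR : R ⊆ Icc 2 (j + 1)) :
    #(partialFBs (j + d + 1) j R) =
      (2 ^ (d + 1)) ^ (j - #R) * (2 ^ (d + 1) - 1) ^ #R *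
        ∏ i ∈ range (d + 1), (2 ^ (i + 1) - 1) := by
  induction d generalizing j R with
  | zero => simp [card_partialFBs_last hR]
  | succ d ih =>
    set A := 2 ^ (d + 1)
    set B := A - 1
    set P := ∏ i ∈ range (d + 1), (2 ^ (i + 1) - 1)
    have hA : 2 ^ (d + 1 + 1) = A + A := by rw [pow_succ]; ring
    have hB : 2 ^ (d + 1 + 1) - 1 = A + B := by have : 1 ≤ A := Nat.one_le_two_pow; omega
    have hIcc : Icc 1 (j + 1) = insert 1 (Icc 2 (j + 1)) := by ext; simp; omega
    have hsummand : ∀ C ∈ (Icc 1 (j + 1)).powerset,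
        #(partialFBs (j + (d + 1) + 1) (j + 1) (requiredRows j R C)) =
          A ^ (j + 1 - #(requiredRows j R C)) * B ^ #(requiredRows j R C) * P := fun C hC => by
      rw [show j + (d + 1) + 1 = j + 1 + d + 1 by ring]
      exact ih (requiredRows_subset hR (mem_powerset.1 hC))
    calc #(partialFBs (j + (d + 1) + 1) j R)
        = (∑ C ∈ (Icc 1 (j + 1)).powerset,
            A ^ (j + 1 - #(requiredRows j R C)) * B ^ #(requiredRows j R C)) * P := by
          rw [card_partialFBs_eq_sum R (by omega), sum_congr rfl hsummand, sum_mul]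
      _ = (A + B) * ((A + A) ^ (j - #R) * (A + B) ^ #R) * P := by
          have hsum := sum_powerset_pow_card_sdiff hR A B
          rw [Nat.card_Icc, show j + 1 + 1 - 2 = j by omega] at hsum
          rw [hIcc, sum_powerset_insert (by simp), ← sum_add_distrib,
            sum_congr rfl fun t ht => pow_card_requiredRows_add A B hR (mem_powerset.1 ht),
            ← mul_sum, hsum]
      _ = (2 ^ (d + 1 + 1)) ^ (j - #R) * (2 ^ (d + 1 + 1) - 1) ^ #R *
            ∏ i ∈ range (d + 1 + 1), (2 ^ (i + 1) - 1) := by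
          rw [prod_range_succ, hB, hA]
          ring

/-- The number of FB-configurations in `I_n` is `Π_{i=1}^n (2^i − 1)`. -/
theorem card_FB_configurations (n : ℕ) (hn : 0 < n) :
    ((indexSet n).powerset.filter (IsFB n)).card
      = ∏ i ∈ Finset.range n, (2 ^ (i + 1) - 1) := by
  obtain ⟨d, rfl⟩ : ∃ d, n = d + 1 := ⟨n - 1, by omega⟩
  rw [filter_isFB_eq_partialFBs]
  simpa using card_partialFBs d (empty_subset (Icc 2 1))
end

section
/- Let Λ be an artin algebra and M, X modules with E = End_Λ(M). If there exists a sequence X → M' → M'' exact in the middle with M', M'' ∈ add(M), such that the induced sequence Hom(M'',M) → Hom(M',M) → Hom(X,M) → 0 is exact, then the natural map X → Hom_E(Hom_Λ(X,M), M) is surjective. -/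
/-!
An `E`-linear map `Φ : Hom(X, M) → M` pulls back along `α` to an `E`-linear map on `Hom(M', M)`.
On `Hom(Mᵏ, M)` such a map is evaluation at the tuple of its values on the projections, since
every `g : Mᵏ → M` is the `E`-combination `∑ (g ∘ single i) • proj i`; passing to a retract, it
is evaluation at some `m' ∈ M'`. Every map `M'' → M` kills `β m'`, because it pulls back to a
map killed by `- ∘ α`; as `M''` embeds in some `Mˡ`, `β m' = 0`. So `m' = α x`, and
surjectivity of `- ∘ α` shows that `Φ` is evaluation at `x`.
-/

open LinearMap

section

variable {Λ M : Type*} [Ring Λ] [AddCommGroup M] [Module Λ M]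

variable (Λ M) in
/-- The natural map `N → Hom_E(Hom_Λ(N, M), M)`, `E = End_Λ(M)`, is surjective. -/
def EvalSurjective (N : Type*) [AddCommGroup N] [Module Λ N] : Prop :=
  ∀ Φ : (N →ₗ[Λ] M) →ₗ[Module.End Λ M] M, ∃ n : N, ∀ f : N →ₗ[Λ] M, Φ f = f n

theorem evalSurjective_pi (ι : Type*) [Fintype ι] : EvalSurjective Λ M (ι → M) := by
  classical
  intro Φ
  refine ⟨fun i => Φ (proj i), fun g => ?_⟩
  have hg : g = ∑ i, (g ∘ₗ single Λ (fun _ => M) i) • proj i := by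
    refine LinearMap.ext fun m => ?_
    simp only [coe_sum, Finset.sum_apply, LinearMap.smul_apply, Module.End.smul_def, comp_apply,
      coe_single, proj_apply, ← map_sum, sum_single_apply]
  calc Φ g = ∑ i, g (Pi.single i (Φ (proj i))) := by
        conv_lhs => rw [hg]
        simp only [map_sum, map_smul, Module.End.smul_def, comp_apply, coe_single]
    _ = g (fun i => Φ (proj i)) := by rw [← map_sum, sum_single_apply]

theorem EvalSurjective.of_retract {N₀ N : Type*} [AddCommGroup N₀] [Module Λ N₀]
    [AddCommGroup N] [Module Λ N] (ι : N →ₗ[Λ] N₀) (π : N₀ →ₗ[Λ] N) (h : π ∘ₗ ι = LinearMap.id)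
    (h₀ : EvalSurjective Λ M N₀) : EvalSurjective Λ M N := by
  intro Φ
  obtain ⟨n₀, hn₀⟩ := h₀ (Φ ∘ₗ lcomp _ M ι)
  refine ⟨π n₀, fun f => ?_⟩
  calc Φ f = Φ ((f ∘ₗ π) ∘ₗ ι) := by rw [comp_assoc, h, comp_id]
    _ = f (π n₀) := hn₀ (f ∘ₗ π)

theorem eq_zero_of_forall_apply_eq_zero_of_injective {ι N : Type*} [AddCommGroup N]
    [Module Λ N] (j : N →ₗ[Λ] (ι → M)) (hj : Function.Injective j) {n : N}
    (h : ∀ g : N →ₗ[Λ] M, g n = 0) : n = 0 :=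
  hj <| funext fun i => by simpa using h (proj i ∘ₗ j)

theorem EvalSurjective.of_exact {X M' M'' : Type*} [AddCommGroup X] [Module Λ X]
    [AddCommGroup M'] [Module Λ M'] [AddCommGroup M''] [Module Λ M'']
    (α : X →ₗ[Λ] M') (β : M' →ₗ[Λ] M'') (hexact : Function.Exact α β)
    (hsurj : Function.Surjective (fun f : M' →ₗ[Λ] M => f.comp α))
    (hM' : EvalSurjective Λ M M')
    (hM'' : ∀ y : M'', (∀ g : M'' →ₗ[Λ] M, g y = 0) → y = 0) :
    EvalSurjective Λ M X := by
  intro Φ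
  obtain ⟨m', hm'⟩ := hM' (Φ ∘ₗ lcomp _ M α)
  have hβ : β m' = 0 := hM'' _ fun g => by
    have hgβα : (g ∘ₗ β) ∘ₗ α = 0 := by
      rw [comp_assoc, hexact.linearMap_comp_eq_zero, comp_zero]
    simpa [lcomp_apply', hgβα] using (hm' (g ∘ₗ β)).symm
  obtain ⟨x, rfl⟩ := (hexact m').mp hβ
  refine ⟨x, fun f => ?_⟩
  obtain ⟨g, rfl⟩ := hsurj f
  exact hm' g

end

theorem eval_surjective_of_exact_presentation_general
    {Λ : Type*} [Ring Λ]
    (M X M' M'' : Type*)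
    [AddCommGroup M] [Module Λ M]
    [AddCommGroup X] [Module Λ X]
    [AddCommGroup M'] [Module Λ M'] [AddCommGroup M''] [Module Λ M'']
    -- `M' ∈ add M`:
    (hM' : ∃ (k : ℕ) (ι : M' →ₗ[Λ] (Fin k → M)) (π : (Fin k → M) →ₗ[Λ] M'),
      π.comp ι = LinearMap.id)
    -- `M'' ∈ add M`:
    (hM'' : ∃ (k : ℕ) (ι : M'' →ₗ[Λ] (Fin k → M)) (π : (Fin k → M) →ₗ[Λ] M''),
      π.comp ι = LinearMap.id)
    (α : X →ₗ[Λ] M') (β : M' →ₗ[Λ] M'')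
    -- the sequence `X → M' → M''` is exact in the middle:
    (hexact : Function.Exact α β)
    -- `Hom(M',M) → Hom(X,M) → 0` is exact, i.e. `(- ∘ α)` is surjective:
    (hsurj : Function.Surjective (fun f : M' →ₗ[Λ] M => f.comp α)) :
    ∀ Φ : (X →ₗ[Λ] M) →ₗ[Module.End Λ M] M, ∃ x : X, ∀ f : X →ₗ[Λ] M, Φ f = f x := by
  obtain ⟨k, ι', π', hπι'⟩ := hM'
  obtain ⟨l, ι'', π'', hπι''⟩ := hM''
  have hι'' : Function.Injective ι'' :=
    Function.LeftInverse.injective (g := π'') fun y => LinearMap.congr_fun hπι'' y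
  exact EvalSurjective.of_exact α β hexact hsurj
    (.of_retract ι' π' hπι' (evalSurjective_pi (Fin k)))
    fun _ => eq_zero_of_forall_apply_eq_zero_of_injective ι'' hι''

/-- Let `Λ` be a finite-dimensional algebra over a field `K` (an artin algebra) and
`M`, `X` finite-dimensional `Λ`-modules, `E = End_Λ(M)`. Suppose there is a sequence
`X → M' → M''` exact in the middle, with `M'`, `M''` direct summands of finite direct
sums of copies of `M` (i.e. in `add M`), such that the induced sequence
`Hom(M'',M) → Hom(M',M) → Hom(X,M) → 0` is exact. Then the natural evaluation map
`X → Hom_E(Hom_Λ(X,M), M)` is surjective: every `E`-linear map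
`Hom_Λ(X,M) → M` is evaluation at some `x ∈ X`. -/
theorem eval_surjective_of_exact_presentation
    {K Λ : Type*} [Field K] [Ring Λ] [Algebra K Λ] [FiniteDimensional K Λ]
    (M X M' M'' : Type*)
    [AddCommGroup M] [Module Λ M] [Module K M] [IsScalarTower K Λ M]
    [FiniteDimensional K M]
    [AddCommGroup X] [Module Λ X] [Module K X] [IsScalarTower K Λ X]
    [FiniteDimensional K X]
    [AddCommGroup M'] [Module Λ M'] [AddCommGroup M''] [Module Λ M'']
    -- `M' ∈ add M`:
    (hM' : ∃ (k : ℕ) (ι : M' →ₗ[Λ] (Fin k → M)) (π : (Fin k → M) →ₗ[Λ] M'),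
      π.comp ι = LinearMap.id)
    -- `M'' ∈ add M`:
    (hM'' : ∃ (k : ℕ) (ι : M'' →ₗ[Λ] (Fin k → M)) (π : (Fin k → M) →ₗ[Λ] M''),
      π.comp ι = LinearMap.id)
    (α : X →ₗ[Λ] M') (β : M' →ₗ[Λ] M'')
    -- the sequence `X → M' → M''` is exact in the middle:
    (hexact : Function.Exact α β)
    -- `Hom(M',M) → Hom(X,M) → 0` is exact, i.e. `(- ∘ α)` is surjective:
    (hsurj : Function.Surjective (fun f : M' →ₗ[Λ] M => f.comp α))
    -- exactness at `Hom(M',M)`: anything killed by `(- ∘ α)` comes from `Hom(M'',M)`: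
    (hmid : ∀ g : M' →ₗ[Λ] M, g.comp α = 0 → ∃ h : M'' →ₗ[Λ] M, h.comp β = g) :
    ∀ Φ : (X →ₗ[Λ] M) →ₗ[Module.End Λ M] M, ∃ x : X, ∀ f : X →ₗ[Λ] M, Φ f = f x :=
  eval_surjective_of_exact_presentation_general M X M' M'' hM' hM'' α β hexact hsurj
end

section
/- Let Λ be a finite-dimensional algebra, M a faithful Λ-module, and X an indecomposable Λ-module with local endomorphism ring. If M ⊕ X is balanced (i.e. the natural map Λ → End_{End_Λ(M⊕X)}(M⊕X) is surjective), then X is generated by M or X is cogenerated by M. -/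
/-!
Let `T` be the trace and `U` the reject of `M` in `X`. Since `X` has finite length, `X ∈ gen M`
as soon as `T = X`, and `X ∈ cogen M` as soon as `U = 0`. Both are fully invariant, hence
submodules over the local ring `O = End_Λ(X)`. If `T ≠ X` and `U ≠ 0`, pick a simple quotient
`X/W` with `T ≤ W` and a simple submodule `V ≤ U`. Over a local ring every nonunit annihilates
every simple module, so `X/W ≅ V`, giving a nonzero `O`-linear `u : X → X` killing `T` with
image in `U`. Then `(m, x) ↦ (0, u x)` commutes with `End_Λ(M ⊕ X)`, so balance makes it
multiplication by some `a ∈ Λ`; `a` kills `M`, so `a = 0` by faithfulness, whereas `u ≠ 0`.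
-/

namespace IsLocalRing

variable {R : Type*} [Ring R] [IsLocalRing R]

/-- If `a * b = 1` then `b * a` is an idempotent, hence `0` or `1`, and it cannot be `0`. -/
instance (priority := 100) toIsDedekindFiniteMonoid : IsDedekindFiniteMonoid R where
  mul_eq_one_symm {a b} hab := by
    have hidem : IsIdempotentElem (b * a) := by
      rw [IsIdempotentElem, mul_assoc, ← mul_assoc a, hab, one_mul]
    rcases isUnit_or_isUnit_of_add_one (add_sub_cancel (b * a) 1) with h | h
    · exact h.mul_left_cancel (by rw [hidem.eq, mul_one])
    · have hba : b * a = 0 :=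
        h.mul_left_cancel (by rw [mul_zero, sub_mul, one_mul, hidem.eq, sub_self])
      refine absurd ?_ (one_ne_zero (α := R))
      calc (1 : R) = a * (b * a) * b := by rw [← mul_assoc, hab, one_mul, hab]
        _ = 0 := by rw [hba, mul_zero, zero_mul]

variable {S T : Type*} [AddCommGroup S] [Module R S] [AddCommGroup T] [Module R T]

theorem smul_eq_zero_of_not_isUnit [IsSimpleModule R S] {a : R} (ha : ¬IsUnit a) (s : S) :
    a • s = 0 := by
  by_contra hs
  obtain ⟨c, hc⟩ := IsSimpleModule.toSpanSingleton_surjective R hs s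
  rw [LinearMap.toSpanSingleton_apply, smul_smul] at hc
  have hunit : IsUnit (1 - c * a) :=
    (isUnit_or_isUnit_of_add_one (add_sub_cancel (c * a) 1)).resolve_left
      fun h ↦ ha (isUnit_of_mul_isUnit_right h)
  have hs0 : s = 0 := hunit.smul_eq_zero.mp (by rw [sub_smul, one_smul, hc, sub_self])
  exact hs (by rw [hs0, smul_zero])

theorem exists_linearMap_ne_zero_of_isSimpleModule [IsSimpleModule R S] [IsSimpleModule R T] :
    ∃ f : S →ₗ[R] T, f ≠ 0 := by
  have := IsSimpleModule.nontrivial R S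
  have := IsSimpleModule.nontrivial R T
  obtain ⟨s, hs⟩ := exists_ne (0 : S)
  obtain ⟨t, ht⟩ := exists_ne (0 : T)
  have hker : LinearMap.ker (LinearMap.toSpanSingleton R S s) ≤
      LinearMap.ker (LinearMap.toSpanSingleton R T t) := fun a ha ↦
    smul_eq_zero_of_not_isUnit (fun hu ↦ hs (hu.smul_eq_zero.mp ha)) t
  let e := LinearMap.quotKerEquivOfSurjective _ (IsSimpleModule.toSpanSingleton_surjective R hs)
  refine ⟨Submodule.liftQ _ _ hker ∘ₗ e.symm.toLinearMap, fun h ↦ ht ?_⟩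
  have he : e.symm s = Submodule.Quotient.mk 1 := e.symm_apply_eq.mpr (by simp [e])
  simpa [he] using LinearMap.congr_fun h s

end IsLocalRing

section

open LinearMap Submodule CompleteLattice

theorem exists_ne_zero_le_ker_range_le {O X : Type*} [Ring O] [IsLocalRing O] [AddCommGroup X]
    [Module O X] [IsNoetherian O X] [IsArtinian O X] {P Q : Submodule O X} (hP : P ≠ ⊤)
    (hQ : Q ≠ ⊥) : ∃ u : Module.End O X, u ≠ 0 ∧ P ≤ ker u ∧ range u ≤ Q := by
  obtain ⟨W, hW, hPW⟩ := (eq_top_or_exists_le_coatom P).resolve_left hP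
  obtain ⟨V, hV, hVQ⟩ := (eq_bot_or_exists_atom_le Q).resolve_left hQ
  have := isSimpleModule_iff_isCoatom.mpr hW
  have := isSimpleModule_iff_isAtom.mpr hV
  obtain ⟨f, hf⟩ := IsLocalRing.exists_linearMap_ne_zero_of_isSimpleModule (R := O)
    (S := X ⧸ W) (T := V)
  refine ⟨V.subtype ∘ₗ f ∘ₗ W.mkQ, fun h ↦ hf ?_, ?_, ?_⟩
  · ext x
    simpa using LinearMap.congr_fun h x
  · exact hPW.trans fun x hx ↦ by simp [(Submodule.Quotient.mk_eq_zero W).mpr hx]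
  · exact (range_comp_le_range _ _).trans (V.range_subtype.trans_le hVQ)

variable {R : Type*} [Ring R] {M X : Type*} [AddCommGroup M] [Module R M] [AddCommGroup X]
  [Module R X]

def Submodule.IsFullyInvariant.toEnd {N : Submodule R X} (h : N.IsFullyInvariant) :
    Submodule (Module.End R X) X where
  carrier := N
  add_mem' := N.add_mem
  zero_mem' := N.zero_mem
  smul_mem' f _ hx := h f hx

theorem Submodule.IsFullyInvariant.toEnd_eq_top {N : Submodule R X} (h : N.IsFullyInvariant) :
    h.toEnd = ⊤ ↔ N = ⊤ := by
  rw [eq_top_iff', eq_top_iff']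
  exact Iff.rfl

theorem Submodule.IsFullyInvariant.toEnd_eq_bot {N : Submodule R X} (h : N.IsFullyInvariant) :
    h.toEnd = ⊥ ↔ N = ⊥ := by
  rw [Submodule.eq_bot_iff, Submodule.eq_bot_iff]
  exact Iff.rfl

variable (R M X) in
def traceOf : Submodule R X := ⨆ f : M →ₗ[R] X, range f

variable (R M X) in
def rejectOf : Submodule R X := ⨅ g : X →ₗ[R] M, ker g

theorem range_le_traceOf (f : M →ₗ[R] X) : range f ≤ traceOf R M X :=
  le_iSup (fun f ↦ range f) f

theorem rejectOf_le_ker (g : X →ₗ[R] M) : rejectOf R M X ≤ ker g :=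
  iInf_le (fun g ↦ ker g) g

theorem isFullyInvariant_traceOf : (traceOf R M X).IsFullyInvariant := fun ψ ↦
  map_le_iff_le_comap.mp <| by
    rw [traceOf, Submodule.map_iSup]
    exact iSup_le fun f ↦ by rw [← range_comp]; exact range_le_traceOf (ψ ∘ₗ f)

theorem isFullyInvariant_rejectOf : (rejectOf R M X).IsFullyInvariant := fun ψ _ hx ↦
  mem_iInf _ |>.mpr fun g ↦ rejectOf_le_ker (g ∘ₗ ψ) hx

theorem exists_surjective_of_iSup_range_eq_top {ι : Type*} [Finite ι] (f : ι → M →ₗ[R] X)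
    (h : ⨆ i, range (f i) = ⊤) :
    ∃ (k : ℕ) (g : (Fin k → M) →ₗ[R] X), Function.Surjective g := by
  classical
  cases nonempty_fintype ι
  have hsum : Function.Surjective (lsum R (fun _ ↦ M) ℕ f) := by
    rw [← range_eq_top, ← top_le_iff, ← h]
    refine iSup_le fun i ↦ ?_
    rintro _ ⟨m, rfl⟩
    exact ⟨Pi.single i m, by simp [Pi.single_apply, apply_ite]⟩
  let e := LinearEquiv.funCongrLeft R M (Fintype.equivFin ι)
  refine ⟨_, lsum R (fun _ ↦ M) ℕ f ∘ₗ e.toLinearMap, ?_⟩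
  rw [coe_comp]
  exact hsum.comp (LinearEquiv.surjective _)

theorem exists_injective_of_iInf_ker_eq_bot {ι : Type*} [Finite ι] (f : ι → X →ₗ[R] M)
    (h : ⨅ i, ker (f i) = ⊥) :
    ∃ (k : ℕ) (g : X →ₗ[R] (Fin k → M)), Function.Injective g := by
  cases nonempty_fintype ι
  have hpi : Function.Injective (LinearMap.pi f) := by rw [← ker_eq_bot, ker_pi, h]
  let e := LinearEquiv.funCongrLeft R M (Fintype.equivFin ι).symm
  refine ⟨_, e.toLinearMap ∘ₗ pi f, ?_⟩
  rw [coe_comp]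
  exact (LinearEquiv.injective _).comp hpi

theorem exists_surjective_of_traceOf_eq_top [Module.Finite R X] (h : traceOf R M X = ⊤) :
    ∃ (k : ℕ) (g : (Fin k → M) →ₗ[R] X), Function.Surjective g := by
  obtain ⟨s, hs⟩ := ((fg_iff_compact ⊤).mp Module.Finite.fg_top).exists_finset_of_le_iSup _
    (fun f : M →ₗ[R] X ↦ range f) h.ge
  exact exists_surjective_of_iSup_range_eq_top (fun f : s ↦ (f : M →ₗ[R] X))
    (top_unique (hs.trans_eq (iSup_subtype' ..)))

/-- In an Artinian module `⊥` is a compact element of the order dual, so finitely many kernels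
already meet in `0`. -/
theorem exists_injective_of_rejectOf_eq_bot [IsArtinian R X] (h : rejectOf R M X = ⊥) :
    ∃ (k : ℕ) (g : X →ₗ[R] (Fin k → M)), Function.Injective g := by
  have : WellFoundedGT (Submodule R X)ᵒᵈ := inferInstanceAs (WellFoundedLT (Submodule R X))
  have hcompact : IsCompactElement (OrderDual.toDual (⊥ : Submodule R X)) :=
    (isSupFiniteCompact_iff_all_elements_compact _).mp (WellFoundedGT.isSupFiniteCompact _) _
  have hle : OrderDual.toDual (⊥ : Submodule R X) ≤
      ⨆ g : X →ₗ[R] M, OrderDual.toDual (ker g) := h.le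
  obtain ⟨s, hs⟩ := hcompact.exists_finset_of_le_iSup _ _ hle
  have hs' : ⨅ g ∈ s, ker g ≤ ⊥ := hs
  exact exists_injective_of_iInf_ker_eq_bot (fun g : s ↦ (g : X →ₗ[R] M))
    (bot_unique ((iInf_subtype' (p := (· ∈ s)) (f := fun g _ ↦ ker g)).symm.trans_le hs'))

def Module.IsBalanced (R N : Type*) [Semiring R] [AddCommMonoid N] [Module R N] : Prop :=
  ∀ φ : N →ₗ[Module.End R N] N, ∃ a : R, ∀ v : N, φ v = a • v

/-- An endomorphism of `M × X` has blocks `M → X`, with image in the trace, and `X → M`,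
vanishing on the reject; `u` sees neither, and commutes with the block `X → X`. -/
def prodEndLinear (u : X →ₗ[Module.End R X] X) (hT : ∀ x ∈ traceOf R M X, u x = 0)
    (hR : ∀ x, u x ∈ rejectOf R M X) : (M × X) →ₗ[Module.End R (M × X)] (M × X) where
  toFun v := (0, u v.2)
  map_add' v w := by simp
  map_smul' e v := by
    let ψ : Module.End R X := snd R M X ∘ₗ e ∘ₗ inr R M X
    have hsnd : (e v).2 = (snd R M X ∘ₗ e ∘ₗ inl R M X) v.1 + ψ v.2 := by
      simp [ψ, ← Prod.snd_add, ← map_add]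
    have hinr : e (0, u v.2) = (0, ψ (u v.2)) := by
      ext
      · exact rejectOf_le_ker (fst R M X ∘ₗ e ∘ₗ inr R M X) (hR v.2)
      · rfl
    show ((0 : M), u (e v).2) = e (0, u v.2)
    rw [hinr, hsnd, map_add, hT _ (range_le_traceOf _ ⟨v.1, rfl⟩), zero_add]
    exact congr_arg _ (u.map_smul ψ v.2)

theorem traceOf_eq_top_or_rejectOf_eq_bot [IsLocalRing (Module.End R X)]
    [IsNoetherian (Module.End R X) X] [IsArtinian (Module.End R X) X]
    (hfaithful : ∀ a : R, (∀ m : M, a • m = 0) → a = 0)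
    (hbal : Module.IsBalanced R (M × X)) :
    traceOf R M X = ⊤ ∨ rejectOf R M X = ⊥ := by
  by_contra! h
  have hT : (traceOf R M X).IsFullyInvariant := isFullyInvariant_traceOf
  have hR : (rejectOf R M X).IsFullyInvariant := isFullyInvariant_rejectOf
  obtain ⟨u, hu, huT, huR⟩ := exists_ne_zero_le_ker_range_le
    (mt hT.toEnd_eq_top.mp h.1) (mt hR.toEnd_eq_bot.mp h.2)
  obtain ⟨a, ha⟩ := hbal (prodEndLinear u (fun x hx ↦ huT hx) (fun x ↦ huR ⟨x, rfl⟩))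
  have ha0 : a = 0 := hfaithful a fun m ↦ (congr_arg Prod.fst (ha (m, 0))).symm
  exact hu (LinearMap.ext fun x ↦ (congr_arg Prod.snd (ha (0, x))).trans (by simp [ha0]))

end

theorem gen_or_cogen_of_balanced_general
    {K Λ : Type*} [Field K] [Ring Λ] [Algebra K Λ]
    (M X : Type*)
    [AddCommGroup M] [Module Λ M]
    [AddCommGroup X] [Module Λ X] [Module K X] [IsScalarTower K Λ X]
    [FiniteDimensional K X]
    -- `M` is faithful:
    (hfaithful : ∀ a : Λ, (∀ m : M, a • m = 0) → a = 0)
    -- `X` is indecomposable with local endomorphism ring: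
    (hlocal : IsLocalRing (Module.End Λ X))
    -- `M ⊕ X` is balanced:
    (hbal : ∀ φ : (M × X) →ₗ[Module.End Λ (M × X)] (M × X),
      ∃ a : Λ, ∀ v : M × X, φ v = a • v) :
    (∃ (k : ℕ) (g : (Fin k → M) →ₗ[Λ] X), Function.Surjective g) ∨
      (∃ (k : ℕ) (g : X →ₗ[Λ] (Fin k → M)), Function.Injective g) := by
  have : Module.Finite Λ X := Module.Finite.of_restrictScalars_finite K Λ X
  have : IsArtinian Λ X := isArtinian_of_tower K inferInstance
  have : IsNoetherian (Module.End Λ X) X := isNoetherian_of_tower K inferInstance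
  have : IsArtinian (Module.End Λ X) X := isArtinian_of_tower K inferInstance
  exact (traceOf_eq_top_or_rejectOf_eq_bot hfaithful hbal).imp
    exists_surjective_of_traceOf_eq_top exists_injective_of_rejectOf_eq_bot

/-- (Morita.) Let `Λ` be a finite-dimensional algebra over a field `K`, `M` a faithful
finite-dimensional `Λ`-module, and `X` an indecomposable finite-dimensional `Λ`-module
with local endomorphism ring. If `M ⊕ X` is balanced, i.e. every
`End_Λ(M ⊕ X)`-linear endomorphism of `M ⊕ X` is given by multiplication by some
element of `Λ`, then `X` is generated by `M` or `X` is cogenerated by `M`. -/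
theorem gen_or_cogen_of_balanced
    {K Λ : Type*} [Field K] [Ring Λ] [Algebra K Λ] [FiniteDimensional K Λ]
    (M X : Type*)
    [AddCommGroup M] [Module Λ M] [Module K M] [IsScalarTower K Λ M]
    [FiniteDimensional K M]
    [AddCommGroup X] [Module Λ X] [Module K X] [IsScalarTower K Λ X]
    [FiniteDimensional K X]
    -- `M` is faithful:
    (hfaithful : ∀ a : Λ, (∀ m : M, a • m = 0) → a = 0)
    -- `X` is indecomposable with local endomorphism ring:
    (hlocal : IsLocalRing (Module.End Λ X))
    -- `M ⊕ X` is balanced: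
    (hbal : ∀ φ : (M × X) →ₗ[Module.End Λ (M × X)] (M × X),
      ∃ a : Λ, ∀ v : M × X, φ v = a • v) :
    (∃ (k : ℕ) (g : (Fin k → M) →ₗ[Λ] X), Function.Surjective g) ∨
      (∃ (k : ℕ) (g : X →ₗ[Λ] (Fin k → M)), Function.Injective g) :=
  gen_or_cogen_of_balanced_general (K := K) M X hfaithful hlocal hbal
end

section
/- Let Λ be an artin algebra, M a faithfully balanced Λ-module, and X a Λ-module with X ∈ gen(M) or X ∈ cogen(M). Then M ⊕ X is faithfully balanced. -/
/-!
Every `Λ`-linear endomorphism of `M ⊕ X` commutes with a biendomorphism `φ`. Using the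
idempotent projections, `φ` preserves both summands, and its restriction to `M` is a
biendomorphism of `M`, hence multiplication by some `a ∈ Λ`. Composing with maps
`M → X` (if `X ∈ gen(M)`) or `X → M` (if `X ∈ cogen(M)`) transports this to `X`:
in the first case `X` is a sum of images of `M`, in the second it embeds into a power of `M`.
-/

namespace ProdBiendomorphism

variable {R M X : Type*} [Ring R] [AddCommGroup M] [Module R M] [AddCommGroup X] [Module R X]

theorem faithful_of_faithful_fst (h : ∀ a : R, (∀ m : M, a • m = 0) → a = 0) :
    ∀ a : R, (∀ v : M × X, a • v = 0) → a = 0 :=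
  fun a ha => h a fun m => congrArg Prod.fst (ha (m, 0))

variable (φ : (M × X) →ₗ[Module.End R (M × X)] (M × X))

theorem map_comm (f : (M × X) →ₗ[R] (M × X)) (v : M × X) : φ (f v) = f (φ v) :=
  φ.map_smul f v

theorem map_inl (m : M) : φ (m, 0) = ((φ (m, 0)).1, 0) := by
  simpa using map_comm φ ((LinearMap.inl R M X).comp (LinearMap.fst R M X)) (m, 0)

theorem map_inr (x : X) : φ (0, x) = (0, (φ (0, x)).2) := by
  simpa using map_comm φ ((LinearMap.inr R M X).comp (LinearMap.snd R M X)) (0, x)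

def restrictFst : M →ₗ[Module.End R M] M where
  toFun m := (φ (m, 0)).1
  map_add' m m' := by
    rw [← Prod.fst_add, ← map_add, Prod.mk_add_mk, add_zero]
  map_smul' f m := by
    simpa using congrArg Prod.fst
      (map_comm φ ((LinearMap.inl R M X).comp (f.comp (LinearMap.fst R M X))) (m, 0))

variable {φ} {a : R}

theorem map_inl_eq_smul (ha : ∀ m : M, restrictFst φ m = a • m) (m : M) :
    φ (m, 0) = (a • m, 0) := by
  rw [map_inl φ m]
  exact congrArg (·, (0 : X)) (ha m)

theorem map_inr_apply_eq_smul (ha : ∀ m : M, φ (m, 0) = (a • m, 0)) (t : M →ₗ[R] X) (m : M) :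
    φ (0, t m) = (0, a • t m) := by
  simpa [ha m] using
    map_comm φ ((LinearMap.inr R M X).comp (t.comp (LinearMap.fst R M X))) (m, 0)

theorem map_inr_eq_smul_of_surjective {ι : Type*} [Finite ι] (ha : ∀ m : M, φ (m, 0) = (a • m, 0))
    (g : (ι → M) →ₗ[R] X) (hg : Function.Surjective g) (x : X) :
    φ (0, x) = (0, a • x) := by
  classical
  let lhs : (ι → M) →+ M × X :=
    φ.toAddMonoidHom.comp ((AddMonoidHom.inr M X).comp g.toAddMonoidHom)
  let rhs : (ι → M) →+ M × X :=
    (AddMonoidHom.inr M X).comp ((DistribSMul.toAddMonoidHom X a).comp g.toAddMonoidHom)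
  have hsingle : lhs = rhs := AddMonoidHom.functions_ext _ _ _ fun i m =>
    map_inr_apply_eq_smul ha (g.comp (LinearMap.single R (fun _ : ι => M) i)) m
  obtain ⟨u, rfl⟩ := hg x
  exact DFunLike.congr_fun hsingle u

theorem map_inr_eq_smul_of_injective {ι : Type*} (ha : ∀ m : M, φ (m, 0) = (a • m, 0))
    (g : X →ₗ[R] (ι → M)) (hg : Function.Injective g) (x : X) :
    φ (0, x) = (0, a • x) := by
  have hcomp (t : X →ₗ[R] M) : t (φ (0, x)).2 = t (a • x) := by
    have h := map_comm φ ((LinearMap.inl R M X).comp (t.comp (LinearMap.snd R M X))) (0, x)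
    simp only [LinearMap.comp_apply, LinearMap.snd_apply, LinearMap.inl_apply, ha] at h
    rw [map_smul]
    exact (congrArg Prod.fst h).symm
  rw [map_inr φ x, hg (funext fun i => hcomp ((LinearMap.proj i).comp g))]

theorem eq_smul_of_inl_of_inr (hM : ∀ m : M, φ (m, 0) = (a • m, 0))
    (hX : ∀ x : X, φ (0, x) = (0, a • x)) (v : M × X) : φ v = a • v := by
  obtain ⟨m, x⟩ := v
  have hsplit : ((m, x) : M × X) = (m, 0) + (0, x) := by simp
  rw [hsplit, map_add, hM, hX, smul_add, Prod.smul_mk, Prod.smul_mk, smul_zero, smul_zero]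

end ProdBiendomorphism

open ProdBiendomorphism in
theorem faithfully_balanced_of_gen_or_cogen_general
    {Λ : Type*} [Ring Λ]
    (M X : Type*)
    [AddCommGroup M] [Module Λ M]
    [AddCommGroup X] [Module Λ X]
    -- `M` is faithful (the natural map `Λ → End_E(M)` is injective):
    (hfaithful : ∀ a : Λ, (∀ m : M, a • m = 0) → a = 0)
    -- `M` is balanced (the natural map `Λ → End_E(M)` is surjective):
    (hbal : ∀ φ : M →ₗ[Module.End Λ M] M, ∃ a : Λ, ∀ m : M, φ m = a • m)
    -- `X ∈ gen(M)` or `X ∈ cogen(M)`: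
    (hX : (∃ (k : ℕ) (g : (Fin k → M) →ₗ[Λ] X), Function.Surjective g) ∨
      (∃ (k : ℕ) (g : X →ₗ[Λ] (Fin k → M)), Function.Injective g)) :
    (∀ a : Λ, (∀ v : M × X, a • v = 0) → a = 0) ∧
      (∀ φ : (M × X) →ₗ[Module.End Λ (M × X)] (M × X),
        ∃ a : Λ, ∀ v : M × X, φ v = a • v) := by
  refine ⟨faithful_of_faithful_fst hfaithful, fun φ => ?_⟩
  obtain ⟨a, ha⟩ := hbal (restrictFst φ)
  have hM := map_inl_eq_smul ha
  refine ⟨a, eq_smul_of_inl_of_inr hM ?_⟩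
  rcases hX with ⟨k, g, hg⟩ | ⟨k, g, hg⟩
  · exact map_inr_eq_smul_of_surjective hM g hg
  · exact map_inr_eq_smul_of_injective hM g hg

/-- Let `Λ` be a finite-dimensional algebra over a field `K` (an artin algebra),
`M` a faithfully balanced finite-dimensional `Λ`-module (the natural map
`Λ → End_{End_Λ(M)}(M)` is injective and surjective), and `X` a finite-dimensional
`Λ`-module with `X ∈ gen(M)` or `X ∈ cogen(M)`. Then `M ⊕ X` is faithfully
balanced. -/
theorem faithfully_balanced_of_gen_or_cogen
    {K Λ : Type*} [Field K] [Ring Λ] [Algebra K Λ] [FiniteDimensional K Λ]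
    (M X : Type*)
    [AddCommGroup M] [Module Λ M] [Module K M] [IsScalarTower K Λ M]
    [FiniteDimensional K M]
    [AddCommGroup X] [Module Λ X] [Module K X] [IsScalarTower K Λ X]
    [FiniteDimensional K X]
    -- `M` is faithful (the natural map `Λ → End_E(M)` is injective):
    (hfaithful : ∀ a : Λ, (∀ m : M, a • m = 0) → a = 0)
    -- `M` is balanced (the natural map `Λ → End_E(M)` is surjective):
    (hbal : ∀ φ : M →ₗ[Module.End Λ M] M, ∃ a : Λ, ∀ m : M, φ m = a • m)
    -- `X ∈ gen(M)` or `X ∈ cogen(M)`: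
    (hX : (∃ (k : ℕ) (g : (Fin k → M) →ₗ[Λ] X), Function.Surjective g) ∨
      (∃ (k : ℕ) (g : X →ₗ[Λ] (Fin k → M)), Function.Injective g)) :
    (∀ a : Λ, (∀ v : M × X, a • v = 0) → a = 0) ∧
      (∀ φ : (M × X) →ₗ[Module.End Λ (M × X)] (M × X),
        ∃ a : Λ, ∀ v : M × X, φ v = a • v) :=
  faithfully_balanced_of_gen_or_cogen_general M X hfaithful hbal hX
end
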